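/- arXiv:1904.02377 — 6 statements merged into one kernel-verified Lean document; each statement's English description precedes it below -/
import Mathlib

section
/- There exists a constant C > 0 such that for every t > 0 and every r with 0 < r < 2t, the Lebesgue measure of the set {θ ∈ [0, 2π] : dist(k_θ · (e^{−2t}·i), e^{−2t}·i) ≤ r} is at most C·e^{−2t+r}. -/
open UpperHalfPlane MeasureTheory

/-- The rotation matrix `[[cos θ, sin θ], [−sin θ, cos θ]]` as an element of `SL(2, ℝ)`. -/
noncomputable def rotSL (θ : ℝ) : Matrix.SpecialLinearGroup (Fin 2) ℝ :=
  ⟨!![Real.cos θ, Real.sin θ; -Real.sin θ, Real.cos θ], by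
    rw [Matrix.det_fin_two_of]
    nlinarith [Real.sin_sq_add_cos_sq θ]⟩

/-- The point `e^{−2t}·i` of the hyperbolic upper half-plane. -/
noncomputable def ptI (t : ℝ) : UpperHalfPlane :=
  ⟨⟨0, Real.exp (-(2 * t))⟩, by simpa using Real.exp_pos (-(2 * t))⟩
/-!
`k_θ` acts on `ℍ` as the hyperbolic rotation about `i` through the angle `2θ`, and a direct
computation gives `sinh (d(k_θ z, z) / 2) = |sin θ| · |1 + z²| / (2 Im z)`; at `z = e^{−2t} i`
this is `|sin θ| sinh 2t`. Since `x ↦ sinh x · e^{−x}` is increasing, `d ≤ r ≤ 2t` forces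
`|sin θ| ≤ e^{−2t+r}`, and by Jordan's inequality such angles in `[0, 2π]` lie within
`(π/2) e^{−2t+r}` of `0`, `π` or `2π`.
-/

open Real

theorem coe_rotSL_smul (θ : ℝ) (z : ℍ) :
    ((rotSL θ • z : ℍ) : ℂ) = (cos θ * z + sin θ) / (-sin θ * z + cos θ) := by
  rw [coe_specialLinearGroup_apply]
  simp [rotSL, -Complex.ofReal_sin, -Complex.ofReal_cos]

theorem denom_rotSL (θ : ℝ) (z : ℍ) :
    denom (Matrix.SpecialLinearGroup.mapGL ℝ (rotSL θ)) z = -sin θ * z + cos θ := by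
  simp only [denom, Matrix.SpecialLinearGroup.mapGL_coe_matrix,
    Matrix.SpecialLinearGroup.map_apply_coe, RingHom.mapMatrix_apply]
  simp [rotSL, -Complex.ofReal_sin, -Complex.ofReal_cos]

theorem im_rotSL_smul (θ : ℝ) (z : ℍ) :
    (rotSL θ • z).im = z.im / ‖-sin θ * (z : ℂ) + cos θ‖ ^ 2 := by
  rw [MulAction.compHom_smul_def, im_smul_eq_div_normSq, denom_rotSL, Complex.normSq_eq_norm_sq]
  simp

theorem coe_rotSL_smul_sub (θ : ℝ) (z : ℍ) :
    ((rotSL θ • z : ℍ) : ℂ) - z = sin θ * (1 + (z : ℂ) ^ 2) / (-sin θ * z + cos θ) := by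
  rw [coe_rotSL_smul, div_sub' (denom_rotSL θ z ▸ denom_ne_zero _ z)]
  ring

theorem sinh_half_dist_rotSL_smul (θ : ℝ) (z : ℍ) :
    sinh (dist (rotSL θ • z) z / 2) = |sin θ| * ‖1 + (z : ℂ) ^ 2‖ / (2 * z.im) := by
  have hd : 0 < ‖-sin θ * (z : ℂ) + cos θ‖ :=
    norm_pos_iff.2 (denom_rotSL θ z ▸ denom_ne_zero _ z)
  have hz := z.im_pos
  rw [sinh_half_dist, im_rotSL_smul, Complex.dist_eq, coe_rotSL_smul_sub, norm_div, norm_mul,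
    Complex.norm_real, Real.norm_eq_abs]
  generalize ‖-sin θ * (z : ℂ) + cos θ‖ = D at hd ⊢
  rw [show z.im / D ^ 2 * z.im = (z.im / D) ^ 2 by ring, sqrt_sq (by positivity)]
  field_simp

theorem sinh_half_dist_rotSL_smul_ptI (θ t : ℝ) :
    sinh (dist (rotSL θ • ptI t) (ptI t) / 2) = |sin θ * sinh (2 * t)| := by
  have hcoe : (ptI t : ℂ) = exp (-(2 * t)) * Complex.I := by
    simp [ptI, Complex.ext_iff, -Complex.ofReal_exp]
  have hsinh : sinh (2 * t) = (1 - exp (-(2 * t)) ^ 2) / (2 * exp (-(2 * t))) := by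
    rw [sinh_eq, exp_neg]
    field_simp
  rw [sinh_half_dist_rotSL_smul, hcoe, mul_pow, Complex.I_sq, abs_mul, hsinh, abs_div,
    abs_of_pos (by positivity : (0 : ℝ) < 2 * exp (-(2 * t))), mul_div_assoc]
  congr 2
  rw [← Real.norm_eq_abs, ← Complex.norm_real]
  push_cast
  ring_nf

theorem sinh_mul_exp_neg_monotone : Monotone fun x => sinh x * exp (-x) := by
  intro a b hab
  have key : ∀ x, sinh x * exp (-x) = (1 - exp (-x) ^ 2) / 2 := fun x => by
    rw [sinh_eq, exp_neg]
    field_simp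
  simp only [key]
  gcongr

theorem abs_sin_le_of_dist_rotSL_smul_ptI_le {θ t r : ℝ} (ht : 0 < t) (hrt : r ≤ 2 * t)
    (h : dist (rotSL θ • ptI t) (ptI t) ≤ r) : |sin θ| ≤ exp (-(2 * t) + r) := by
  have hr : 0 ≤ r := dist_nonneg.trans h
  have hsinh : 0 < sinh (2 * t) := sinh_pos_iff.2 (by linarith)
  have hsin : |sin θ| * sinh (2 * t) ≤ sinh (r / 2) := by
    rw [← abs_of_pos hsinh, ← abs_mul, ← sinh_half_dist_rotSL_smul_ptI]
    exact sinh_le_sinh.2 (by linarith)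
  have hmono : sinh (r / 2) * exp (-(r / 2)) ≤ sinh (2 * t) * exp (-(2 * t)) :=
    sinh_mul_exp_neg_monotone (by linarith)
  refine le_of_mul_le_mul_right ?_ hsinh
  calc |sin θ| * sinh (2 * t) ≤ sinh (r / 2) := hsin
    _ = sinh (r / 2) * exp (-(r / 2)) * exp (r / 2) := by rw [mul_assoc, ← exp_add]; simp
    _ ≤ sinh (2 * t) * exp (-(2 * t)) * exp r := by gcongr; linarith
    _ = exp (-(2 * t) + r) * sinh (2 * t) := by rw [exp_add]; ring

theorem mem_closedBall_of_abs_sin_le {θ δ : ℝ} (k : ℕ) (hk : |θ - k * π| ≤ π / 2)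
    (h : |sin θ| ≤ δ) : θ ∈ Metric.closedBall (k * π) (π / 2 * δ) := by
  have hjordan := mul_abs_le_abs_sin hk
  rw [sin_sub_nat_mul_pi, abs_mul, abs_pow, abs_neg, abs_one, one_pow, one_mul] at hjordan
  rw [Metric.mem_closedBall, Real.dist_eq]
  have := pi_pos
  calc |θ - k * π| = π / 2 * (2 / π * |θ - k * π|) := by field_simp
    _ ≤ π / 2 * δ := by gcongr; linarith

theorem abs_sin_le_subset_biUnion_closedBall (δ : ℝ) :
    {θ ∈ Set.Icc 0 (2 * π) | |sin θ| ≤ δ} ⊆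
      ⋃ k ∈ Finset.range 3, Metric.closedBall ((k : ℕ) * π) (π / 2 * δ) := by
  rintro θ ⟨⟨h0, h2π⟩, hδ⟩
  have := pi_pos
  obtain ⟨k, hk3, hk⟩ :
      ∃ k < 3, -(π / 2) ≤ θ - (k : ℕ) * π ∧ θ - (k : ℕ) * π ≤ π / 2 := by
    rcases le_or_gt θ (π / 2) with h₁ | h₁
    · exact ⟨0, by norm_num, by push_cast; constructor <;> linarith⟩
    rcases le_or_gt θ (3 * π / 2) with h₂ | h₂
    · exact ⟨1, by norm_num, by push_cast; constructor <;> linarith⟩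
    · exact ⟨2, by norm_num, by push_cast; constructor <;> linarith⟩
  exact Set.mem_biUnion (Finset.mem_range.2 hk3)
    (mem_closedBall_of_abs_sin_le k (abs_le.2 hk) hδ)

theorem volume_abs_sin_le_le (δ : ℝ) :
    volume {θ ∈ Set.Icc 0 (2 * π) | |sin θ| ≤ δ} ≤ ENNReal.ofReal (3 * π * δ) :=
  calc volume {θ ∈ Set.Icc 0 (2 * π) | |sin θ| ≤ δ}
      ≤ ∑ k ∈ Finset.range 3, volume (Metric.closedBall ((k : ℕ) * π) (π / 2 * δ)) :=
        (measure_mono (abs_sin_le_subset_biUnion_closedBall δ)).trans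
          (measure_biUnion_finset_le _ _)
    _ = ENNReal.ofReal (3 * π * δ) := by
        simp only [Real.volume_closedBall, Finset.sum_const, Finset.card_range, nsmul_eq_mul]
        rw [← ENNReal.ofReal_natCast, ← ENNReal.ofReal_mul (by norm_num)]
        congr 1
        ring

/-- Spherical measure estimate, `SO(2,1)` case: there is a constant `C > 0` so that for all
`t > 0` and `0 < r < 2t`, the Lebesgue measure of the set of angles `θ ∈ [0, 2π]` with
`dist (k_θ · e^{−2t} i, e^{−2t} i) ≤ r` is at most `C·e^{−2t+r}`. -/
theorem measure_rot_dist_le : ∃ C : ℝ, 0 < C ∧ ∀ t : ℝ, 0 < t → ∀ r : ℝ, 0 < r → r < 2 * t →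
    volume {θ ∈ Set.Icc (0 : ℝ) (2 * Real.pi) | dist (rotSL θ • ptI t) (ptI t) ≤ r}
      ≤ ENNReal.ofReal (C * Real.exp (-(2 * t) + r)) := by
  refine ⟨3 * π, by positivity, fun t ht r _ hrt => ?_⟩
  calc volume {θ ∈ Set.Icc (0 : ℝ) (2 * π) | dist (rotSL θ • ptI t) (ptI t) ≤ r}
      ≤ volume {θ ∈ Set.Icc 0 (2 * π) | |sin θ| ≤ exp (-(2 * t) + r)} :=
        measure_mono fun θ hθ => ⟨hθ.1, abs_sin_le_of_dist_rotSL_smul_ptI_le ht hrt.le hθ.2⟩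
    _ ≤ ENNReal.ofReal (3 * π * exp (-(2 * t) + r)) := volume_abs_sin_le_le _
end

section
/- For all t ∈ ℝ and all θ ∈ ℝ, cosh(dist(k_θ · (e^{−2t}·i), e^{−2t}·i)) = 1 + 2·sinh²(2t)·sin²(θ). -/
open UpperHalfPlane

/-!
A Möbius transformation `g` with positive determinant satisfies
`g • z - z = (num - z · denom) / denom` and `Im (g • z) = det g · Im z / |denom|²`, so
`|denom|²` cancels in `cosh d(w, z) = 1 + |w - z|² / (2 Im w Im z)`. For the rotation `k_θ` one finds
`num - z · denom = sin θ · (1 + z²)`, and at `z = e^{-2t} i`,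
`1 + z² = 1 - e^{-4t} = 2 sinh(2t) e^{-2t}`.
-/

theorem UpperHalfPlane.cosh_dist_smul_self {g : GL (Fin 2) ℝ} (hg : 0 < g.det.val) (z : ℍ) :
    Real.cosh (dist (g • z) z) =
      1 + ‖num g z - z * denom g z‖ ^ 2 / (2 * g.det.val * z.im ^ 2) := by
  have hdenom : denom g z ≠ 0 := denom_ne_zero g z
  have hdist : dist (↑(g • z) : ℂ) z = ‖num g z - z * denom g z‖ / ‖denom g z‖ := by
    rw [coe_smul_of_det_pos hg, dist_eq_norm, ← norm_div, sub_div, mul_div_cancel_right₀ _ hdenom]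
  rw [cosh_dist, hdist, im_smul_eq_div_normSq, abs_of_pos hg, Complex.normSq_eq_norm_sq]
  have := norm_pos_iff.2 hdenom
  have := z.im_pos
  field_simp

theorem num_sub_mul_denom_rotSL (θ : ℝ) (z : ℂ) :
    num (Matrix.SpecialLinearGroup.mapGL ℝ (rotSL θ)) z
      - z * denom (Matrix.SpecialLinearGroup.mapGL ℝ (rotSL θ)) z = Real.sin θ * (1 + z ^ 2) := by
  have hrot : (Matrix.SpecialLinearGroup.mapGL ℝ (rotSL θ) : Matrix (Fin 2) (Fin 2) ℝ) =
      !![Real.cos θ, Real.sin θ; -Real.sin θ, Real.cos θ] := rfl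
  simp only [num, denom, hrot, Matrix.of_apply, Matrix.cons_val', Matrix.cons_val_zero,
    Matrix.cons_val_one, Matrix.cons_val_fin_one, Complex.ofReal_neg]
  ring

theorem Real.one_sub_exp_neg_sq (x : ℝ) :
    1 - Real.exp (-x) ^ 2 = 2 * Real.sinh x * Real.exp (-x) := by
  have h : Real.exp x * Real.exp (-x) = 1 := by rw [← Real.exp_add, add_neg_cancel, Real.exp_zero]
  rw [Real.sinh_eq]
  linear_combination -h

theorem one_add_ptI_sq (t : ℝ) : 1 + (ptI t : ℂ) ^ 2 = 2 * Real.sinh (2 * t) * (ptI t).im := by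
  have hpt : (ptI t : ℂ) = (ptI t).im * Complex.I :=
    Complex.ext (by simp only [coe_re, Complex.re_ofReal_mul, Complex.I_re, mul_zero]; rfl)
      (by simp)
  have hy : ((1 - (ptI t).im ^ 2 : ℝ) : ℂ) = ((2 * Real.sinh (2 * t) * (ptI t).im : ℝ) : ℂ) :=
    congrArg _ (Real.one_sub_exp_neg_sq (2 * t))
  simp only [Complex.ofReal_sub, Complex.ofReal_one, Complex.ofReal_pow, Complex.ofReal_mul,
    Complex.ofReal_ofNat] at hy
  rw [hpt]
  linear_combination hy + ((ptI t).im : ℂ) ^ 2 * Complex.I_sq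

/-- Hyperbolic law of cosines computation:
`cosh (dist (k_θ · e^{−2t} i, e^{−2t} i)) = 1 + 2 sinh²(2t) sin²(θ)`. -/
theorem cosh_dist_rot_eq (t θ : ℝ) :
    Real.cosh (dist (rotSL θ • ptI t) (ptI t)) =
      1 + 2 * Real.sinh (2 * t) ^ 2 * Real.sin θ ^ 2 := by
  have hdet : (Matrix.SpecialLinearGroup.mapGL ℝ (rotSL θ)).det.val = 1 := by simp
  rw [MulAction.compHom_smul_def, cosh_dist_smul_self (hdet ▸ one_pos), hdet,
    num_sub_mul_denom_rotSL, one_add_ptI_sq]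
  have hreal : (Real.sin θ : ℂ) * (2 * Real.sinh (2 * t) * (ptI t).im) =
      ((Real.sin θ * (2 * Real.sinh (2 * t) * (ptI t).im) : ℝ) : ℂ) := by push_cast; ring
  have := (ptI t).im_pos
  rw [hreal, Complex.norm_real, Real.norm_eq_abs, sq_abs]
  field_simp
end

section
/- Let p be an odd prime and let α ∈ ℤ_p satisfy ‖α‖_p ≥ 1/p (i.e. α ≠ 0 with p-adic valuation 0 or 1) and suppose −α is not a square in ℚ_p. Then for all x, y ∈ ℚ_p, ‖x² + α·y²‖_p = max(‖x‖_p², ‖α‖_p·‖y‖_p²). -/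
/-! By the ultrametric inequality only the case `‖x‖² = ‖α‖‖y‖²` needs work. Since `‖α‖ = ‖x/y‖²`
is an even power of `p` lying in `[1/p, 1]`, `α` and `t = x/y` are units, and
`x² + αy² = y²(t² + α)`. If `‖t² + α‖ < 1`, Hensel's lemma (`p` odd, so the derivative `2t` of
`X² + α` is a unit) would lift `t` to a square root of `-α`. -/

open Polynomial

theorem Padic.norm_eq_one_of_inv_le_norm_sq {p : ℕ} [Fact p.Prime] {z : ℚ_[p]}
    (h₁ : (1 : ℝ) / p ≤ ‖z‖ ^ 2) (h₂ : ‖z‖ ^ 2 ≤ 1) : ‖z‖ = 1 := by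
  have hz : ‖z‖ ≤ 1 := (pow_le_one_iff_of_nonneg (norm_nonneg z) two_ne_zero).mp h₂
  refine hz.antisymm (not_lt.mp fun hlt => ?_)
  have hzp : ‖z‖ ≤ (p : ℝ)⁻¹ := by
    simpa using (norm_lt_pow_iff_norm_le_pow_sub_one z 0).mp (by simpa using hlt)
  have hp_inv : (0 : ℝ) < (p : ℝ)⁻¹ := by simpa using (Fact.out : p.Prime).pos
  have hlt' : ‖z‖ ^ 2 < 1 / p := by
    calc ‖z‖ ^ 2 = ‖z‖ * ‖z‖ := sq _
      _ ≤ ‖z‖ * (p : ℝ)⁻¹ := by gcongr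
      _ < 1 * (p : ℝ)⁻¹ := by gcongr
      _ = 1 / p := by rw [one_mul, one_div]
  linarith

namespace PadicInt

variable {p : ℕ} [Fact p.Prime]

theorem norm_two_eq_one (hp : p ≠ 2) : ‖(2 : ℤ_[p])‖ = 1 := by
  exact_mod_cast norm_natCast_eq_one_iff.mpr ((Nat.coprime_primes Fact.out Nat.prime_two).mpr hp)

theorem exists_sq_eq_of_norm_sq_sub_lt_one (hp : p ≠ 2) {a t : ℤ_[p]} (ht : ‖t‖ = 1)
    (h : ‖t ^ 2 - a‖ < 1) : ∃ z : ℤ_[p], z ^ 2 = a := by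
  obtain ⟨z, hz, -⟩ := hensels_lemma (F := X ^ 2 - C a) (a := t) (by
    simpa [derivative_X_pow, one_add_one_eq_two, norm_two_eq_one hp, ht] using h)
  exact ⟨z, by simpa [sub_eq_zero] using hz⟩

theorem norm_sq_add_eq_one (hp : p ≠ 2) {a t : ℤ_[p]} (ht : ‖t‖ = 1)
    (ha : ¬∃ z : ℚ_[p], z ^ 2 = -(a : ℚ_[p])) : ‖t ^ 2 + a‖ = 1 := by
  refine (norm_le_one _).antisymm (not_lt.mp fun h => ha ?_)
  obtain ⟨z, hz⟩ := exists_sq_eq_of_norm_sq_sub_lt_one hp ht (a := -a) (by rwa [sub_neg_eq_add])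
  exact ⟨z, by simpa using congrArg ((↑) : ℤ_[p] → ℚ_[p]) hz⟩

end PadicInt

/-- Anisotropy norm formula for the binary form `x² + αy²` over `ℚ_p`, `p` an odd prime:
if `α ∈ ℤ_p` has `‖α‖_p ≥ 1/p` and `−α` is not a square in `ℚ_p`, then
`‖x² + αy²‖_p = max(‖x‖_p², ‖α‖_p·‖y‖_p²)` for all `x, y ∈ ℚ_p`. -/
theorem padic_norm_binary_anisotropic (p : ℕ) [Fact p.Prime] (hp : Odd p)
    (α : ℤ_[p]) (hα : (1 : ℝ) / p ≤ ‖α‖)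
    (hsq : ¬∃ x : ℚ_[p], x ^ 2 = -(α : ℚ_[p])) (x y : ℚ_[p]) :
    ‖x ^ 2 + (α : ℚ_[p]) * y ^ 2‖ = max (‖x‖ ^ 2) (‖(α : ℚ_[p])‖ * ‖y‖ ^ 2) := by
  have hx2 : ‖x ^ 2‖ = ‖x‖ ^ 2 := norm_pow x 2
  have hαy2 : ‖(α : ℚ_[p]) * y ^ 2‖ = ‖(α : ℚ_[p])‖ * ‖y‖ ^ 2 := by rw [norm_mul, norm_pow]
  rcases ne_or_eq (‖x‖ ^ 2) (‖(α : ℚ_[p])‖ * ‖y‖ ^ 2) with hne | heq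
  · rw [Padic.add_eq_max_of_ne (by rwa [hx2, hαy2]), hx2, hαy2]
  rcases eq_or_ne y 0 with rfl | hy
  · simp_all
  have hxy : ‖x / y‖ ^ 2 = ‖α‖ := by
    rw [norm_div, div_pow, heq, mul_div_cancel_right₀ _ (by simpa using hy)]
    rfl
  have ht : ‖x / y‖ = 1 :=
    Padic.norm_eq_one_of_inv_le_norm_sq (hxy ▸ hα) (hxy ▸ PadicInt.norm_le_one α)
  let t : ℤ_[p] := ⟨x / y, ht.le⟩
  have hsplit : x ^ 2 + (α : ℚ_[p]) * y ^ 2 = y ^ 2 * ((t ^ 2 + α : ℤ_[p]) : ℚ_[p]) := by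
    push_cast
    change _ = y ^ 2 * ((x / y) ^ 2 + α)
    field_simp
  have hnorm := PadicInt.norm_sq_add_eq_one (hp.ne_two_of_dvd_nat (dvd_refl p)) (t := t) ht hsq
  have hα1 : ‖(α : ℚ_[p])‖ = 1 := by
    rw [PadicInt.padic_norm_e_of_padicInt, ← hxy, ht, one_pow]
  rw [hsplit, norm_mul, norm_pow, PadicInt.padic_norm_e_of_padicInt, hnorm, heq, hα1, one_mul,
    mul_one, max_self]
end

section
/- Let p be an odd prime and let α ∈ ℤ_p satisfy ‖α‖_p ≥ 1/p, with −α not a square in ℚ_p. Define the quadratic form q(x₁, x₂, x₃, x₄) = 2x₁x₄ + x₂² + α·x₃² on ℚ_p⁴. Suppose A is a 4×4 matrix over ℚ_p such that q(Av) = q(v) for all v ∈ ℚ_p⁴ and A commutes with D = diag(p^{−1}, 1, 1, p). Then A is block diagonal of the form A = diag(a₁₁, B, a₄₄) (all entries A_{1j}, A_{j1}, A_{4j}, A_{j4} with j ∈ {2,3} vanish, as do A₁₄ and A₄₁), with a₁₁·a₄₄ = 1, and all four entries of the middle 2×2 block B lie in ℤ_p. -/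
section auxCentralizer

variable {p : ℕ} [hp : Fact p.Prime]

lemma padic_sq_norm_le_one' {x : ℚ_[p]} (h : ‖x‖ ^ 2 ≤ (p : ℝ)) : ‖x‖ ≤ 1 := by
  rcases eq_or_ne x 0 with rfl | hx
  · simp
  · have hp1 : (1 : ℝ) < p := by exact_mod_cast hp.out.one_lt
    rw [Padic.norm_eq_zpow_neg_valuation hx] at h ⊢
    have h2 : ((p : ℝ) ^ (-x.valuation)) ^ (2 : ℕ) = (p : ℝ) ^ (-x.valuation * 2) := by
      rw [← zpow_natCast ((p : ℝ) ^ (-x.valuation)) 2, ← zpow_mul]; norm_num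
    rw [h2] at h
    have h3 : (p : ℝ) ^ (-x.valuation * 2) ≤ (p : ℝ) ^ (1 : ℤ) := by rw [zpow_one]; exact h
    have h4 : -x.valuation * 2 ≤ 1 := (zpow_le_zpow_iff_right₀ hp1).mp h3
    have hv : -x.valuation ≤ 0 := by omega
    calc (p : ℝ) ^ (-x.valuation) ≤ (p : ℝ) ^ (0 : ℤ) :=
          (zpow_le_zpow_iff_right₀ hp1).mpr hv
      _ = 1 := zpow_zero _

lemma padic_exists_sqrt' (hodd : Odd p) {u : ℚ_[p]} (hu : ‖u‖ < 1) :
    ∃ z : ℚ_[p], z ^ 2 = 1 + u := by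
  set U : ℤ_[p] := ⟨u, hu.le⟩ with hU
  have h2 : ‖(2 : ℤ_[p])‖ = 1 := by
    have hd : ¬ ((p : ℤ) ∣ 2) := by
      intro h
      have hpd : p ∣ 2 := by exact_mod_cast h
      have := Nat.le_of_dvd (by norm_num) hpd
      have := hp.out.two_le
      rw [Nat.odd_iff] at hodd
      omega
    have hlt := (PadicInt.norm_int_lt_one_iff_dvd (p := p) 2).not.mpr hd
    push_cast at hlt
    exact le_antisymm (PadicInt.norm_le_one _) (not_lt.mp hlt)
  set F : Polynomial ℤ_[p] := Polynomial.X ^ 2 - Polynomial.C (1 + U) with hF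
  have heval : F.eval 1 = -U := by simp [hF]
  have hderiv : F.derivative.eval 1 = 2 := by
    simp [hF, Polynomial.derivative_pow]
  have hnorm : ‖F.eval 1‖ < ‖F.derivative.eval 1‖ ^ 2 := by
    rw [heval, hderiv, h2, norm_neg]
    simpa [PadicInt.norm_def, hU] using hu
  obtain ⟨z, hz, -⟩ := hensels_lemma hnorm
  have hz' : z ^ 2 = 1 + U := by
    have h0 : z ^ 2 - (1 + U) = 0 := by simpa [hF] using hz
    exact sub_eq_zero.mp h0
  refine ⟨(z : ℚ_[p]), ?_⟩
  have := congrArg (fun w : ℤ_[p] => (w : ℚ_[p])) hz'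
  push_cast at this
  simpa [hU] using this

lemma padic_aniso (hodd : Odd p) {α : ℚ_[p]} (hα0 : α ≠ 0) (hαle : ‖α‖ ≤ 1)
    (hsq : ¬∃ x : ℚ_[p], x ^ 2 = -α) (x y : ℚ_[p]) :
    ‖α‖ * max ‖x‖ ‖y‖ ^ 2 ≤ ‖x ^ 2 + α * y ^ 2‖ := by
  rcases eq_or_ne y 0 with rfl | hy
  · rw [norm_zero, max_eq_left (norm_nonneg x)]
    simp only [zero_pow, mul_zero, add_zero, norm_pow, two_ne_zero, ne_eq,
      not_false_iff, OfNat.ofNat_ne_zero]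
    nlinarith [norm_nonneg x]
  · by_cases hne : ‖x ^ 2‖ = ‖α * y ^ 2‖
    · have hy0 : (0:ℝ) < ‖y‖ := norm_pos_iff.mpr hy
      have hα0' : (0:ℝ) < ‖α‖ := norm_pos_iff.mpr hα0
      have hx2 : ‖x‖ ^ 2 = ‖α‖ * ‖y‖ ^ 2 := by
        simpa [norm_mul, norm_pow] using hne
      have hmax : max ‖x‖ ‖y‖ = ‖y‖ :=
        max_eq_right (by nlinarith [norm_nonneg x])
      rw [hmax]
      by_contra hlt
      push_neg at hlt
      have hx0 : x ≠ 0 := by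
        intro h
        rw [h] at hx2
        simp at hx2
        tauto
      have ht0 : x / y ≠ 0 := div_ne_zero hx0 hy
      have htα : ‖(x / y) ^ 2‖ = ‖α‖ := by
        rw [norm_pow, norm_div]
        field_simp
        nlinarith
      have hkey : ‖(x / y) ^ 2 + α‖ < ‖α‖ := by
        have he : (x / y) ^ 2 + α = (x ^ 2 + α * y ^ 2) / y ^ 2 := by
          field_simp
        rw [he, norm_div, norm_pow, div_lt_iff₀ (by positivity)]
        nlinarith
      set t := x / y with ht
      have hu : ‖-((t ^ 2 + α) / t ^ 2)‖ < 1 := by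
        rw [norm_neg, norm_div, htα, div_lt_one hα0']
        exact hkey
      obtain ⟨z, hz⟩ := padic_exists_sqrt' hodd hu
      apply hsq
      refine ⟨t * z, ?_⟩
      have ht2 : t ^ 2 ≠ 0 := pow_ne_zero _ ht0
      have : (t * z) ^ 2 = t ^ 2 * (1 + -((t ^ 2 + α) / t ^ 2)) := by
        rw [mul_pow, hz]
      rw [this]
      field_simp
      ring
    · rw [Padic.add_eq_max_of_ne hne, norm_pow, norm_mul, norm_pow]
      rcases max_cases ‖x‖ ‖y‖ with ⟨h1, h2⟩ | ⟨h1, h2⟩ <;> rw [h1]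
      · exact le_max_of_le_left (by nlinarith [norm_nonneg x])
      · exact le_max_of_le_right le_rfl

end auxCentralizer

/-- Centralizer computation for the non-split isotropic rank-4 form
`q(x₁,x₂,x₃,x₄) = 2x₁x₄ + x₂² + αx₃²` over `ℚ_p` (`p` an odd prime, `α ∈ ℤ_p` with
`‖α‖_p ≥ 1/p` and `−α` not a square): any matrix `A` preserving `q` and commuting with
`D = diag(p⁻¹, 1, 1, p)` is block diagonal `diag(a₁₁, B, a₄₄)` with `a₁₁a₄₄ = 1` and all
entries of the middle `2×2` block `B` in `ℤ_p`. -/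
theorem centralizer_block_integral (p : ℕ) [Fact p.Prime] (hp : Odd p)
    (α : ℤ_[p]) (hα : (1 : ℝ) / p ≤ ‖α‖)
    (hsq : ¬∃ x : ℚ_[p], x ^ 2 = -(α : ℚ_[p]))
    (q : (Fin 4 → ℚ_[p]) → ℚ_[p])
    (hq : ∀ v : Fin 4 → ℚ_[p],
      q v = 2 * v 0 * v 3 + v 1 ^ 2 + (α : ℚ_[p]) * v 2 ^ 2)
    (A : Matrix (Fin 4) (Fin 4) ℚ_[p])
    (hA : ∀ v : Fin 4 → ℚ_[p], q (A.mulVec v) = q v)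
    (hAD : A * Matrix.diagonal ![(p : ℚ_[p])⁻¹, 1, 1, (p : ℚ_[p])] =
      Matrix.diagonal ![(p : ℚ_[p])⁻¹, 1, 1, (p : ℚ_[p])] * A) :
    (A 0 1 = 0 ∧ A 0 2 = 0 ∧ A 1 0 = 0 ∧ A 2 0 = 0 ∧
     A 3 1 = 0 ∧ A 3 2 = 0 ∧ A 1 3 = 0 ∧ A 2 3 = 0 ∧
     A 0 3 = 0 ∧ A 3 0 = 0) ∧
    A 0 0 * A 3 3 = 1 ∧
    (‖A 1 1‖ ≤ 1 ∧ ‖A 1 2‖ ≤ 1 ∧ ‖A 2 1‖ ≤ 1 ∧ ‖A 2 2‖ ≤ 1) := by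
  have hpR : (1 : ℝ) < p := by exact_mod_cast (Fact.out : p.Prime).one_lt
  have hp0 : (0 : ℝ) < p := lt_trans one_pos hpR
  have hnp : ‖(p : ℚ_[p])‖ = (p : ℝ)⁻¹ := Padic.norm_p
  have hnpi : ‖(p : ℚ_[p])⁻¹‖ = (p : ℝ) := by rw [norm_inv, hnp, inv_inv]
  have hinv1 : (p : ℝ)⁻¹ < 1 := inv_lt_one_of_one_lt₀ hpR
  -- distinctness of diagonal entries
  have e1 : (p : ℚ_[p])⁻¹ ≠ 1 := by
    intro h; apply_fun (‖·‖) at h; rw [hnpi, norm_one] at h; linarith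
  have e2 : (p : ℚ_[p]) ≠ 1 := by
    intro h; apply_fun (‖·‖) at h; rw [hnp, norm_one] at h; linarith
  have e3 : (p : ℚ_[p])⁻¹ ≠ (p : ℚ_[p]) := by
    intro h; apply_fun (‖·‖) at h; rw [hnpi, hnp] at h; linarith
  have hzero : ∀ i j, (![(p : ℚ_[p])⁻¹, 1, 1, (p : ℚ_[p])] i ≠
      ![(p : ℚ_[p])⁻¹, 1, 1, (p : ℚ_[p])] j) → A i j = 0 := by
    intro i j hne
    by_contra h0
    have h := congrFun (congrFun hAD i) j
    rw [Matrix.mul_diagonal, Matrix.diagonal_mul] at h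
    exact hne ((mul_left_cancel₀ h0 (h.trans (mul_comm _ _))).symm)
  have z01 : A 0 1 = 0 := hzero 0 1 (by simpa using e1)
  have z02 : A 0 2 = 0 := hzero 0 2 (by simpa using e1)
  have z10 : A 1 0 = 0 := hzero 1 0 (by simpa using e1.symm)
  have z20 : A 2 0 = 0 := hzero 2 0 (by simpa using e1.symm)
  have z31 : A 3 1 = 0 := hzero 3 1 (by simpa using e2)
  have z32 : A 3 2 = 0 := hzero 3 2 (by simpa using e2)
  have z13 : A 1 3 = 0 := hzero 1 3 (by simpa using e2.symm)
  have z23 : A 2 3 = 0 := hzero 2 3 (by simpa using e2.symm)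
  have z03 : A 0 3 = 0 := hzero 0 3 (by simpa using e3)
  have z30 : A 3 0 = 0 := hzero 3 0 (by simpa using e3.symm)
  -- the quadratic form equations
  have q3 := hA ![1, 0, 0, 1]
  simp only [hq] at q3
  simp [Matrix.mulVec, dotProduct, Fin.sum_univ_four,
    z01, z02, z10, z20, z31, z32, z13, z23, z03, z30] at q3
  have q1 := hA ![0, 1, 0, 0]
  simp only [hq] at q1
  simp [Matrix.mulVec, dotProduct, Fin.sum_univ_four,
    z01, z31] at q1
  have q2 := hA ![0, 0, 1, 0]
  simp only [hq] at q2
  simp [Matrix.mulVec, dotProduct, Fin.sum_univ_four,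
    z02, z32] at q2
  refine ⟨⟨z01, z02, z10, z20, z31, z32, z13, z23, z03, z30⟩, ?_, ?_⟩
  · linear_combination q3 / 2
  · -- norm bounds
    have hαQ : ‖(α : ℚ_[p])‖ = ‖α‖ := (PadicInt.norm_def).symm
    have hα0 : (0 : ℝ) < ‖(α : ℚ_[p])‖ := by
      rw [hαQ]; calc (0:ℝ) < 1 / p := by positivity
        _ ≤ ‖α‖ := hα
    have hα0' : (α : ℚ_[p]) ≠ 0 := norm_pos_iff.mp hα0
    have hαle : ‖(α : ℚ_[p])‖ ≤ 1 := by rw [hαQ]; exact α.norm_le_one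
    have hpα : (1 : ℝ) / p ≤ ‖(α : ℚ_[p])‖ := by rw [hαQ]; exact hα
    have bound : ∀ x y : ℚ_[p], x ^ 2 + (α : ℚ_[p]) * y ^ 2 = 1 ∨
        x ^ 2 + (α : ℚ_[p]) * y ^ 2 = (α : ℚ_[p]) → ‖x‖ ≤ 1 ∧ ‖y‖ ≤ 1 := by
      intro x y h
      have k := padic_aniso hp hα0' hαle hsq x y
      have hle : ‖(α : ℚ_[p])‖ * max ‖x‖ ‖y‖ ^ 2 ≤ 1 := by
        rcases h with h | h
        · rw [h, norm_one] at k; exact k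
        · rw [h] at k; exact le_trans k hαle
      have hm : max ‖x‖ ‖y‖ ^ 2 ≤ (p : ℝ) := by
        have h5 : (1 / (p : ℝ)) * max ‖x‖ ‖y‖ ^ 2 ≤ 1 :=
          le_trans (mul_le_mul_of_nonneg_right hpα (sq_nonneg _)) hle
        calc max ‖x‖ ‖y‖ ^ 2 = (p : ℝ) * ((1 / p) * max ‖x‖ ‖y‖ ^ 2) := by field_simp
          _ ≤ (p : ℝ) * 1 := mul_le_mul_of_nonneg_left h5 hp0.le
          _ = p := mul_one _
      constructor
      · exact padic_sq_norm_le_one' (le_trans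
          (pow_le_pow_left₀ (norm_nonneg x) (le_max_left _ _) 2) hm)
      · exact padic_sq_norm_le_one' (le_trans
          (pow_le_pow_left₀ (norm_nonneg y) (le_max_right _ _) 2) hm)
    obtain ⟨b1, b2⟩ := bound (A 1 1) (A 2 1) (Or.inl (by linear_combination q1))
    obtain ⟨b3, b4⟩ := bound (A 1 2) (A 2 2) (Or.inr (by linear_combination q2))
    exact ⟨b1, b3, b2, b4⟩
end

section
/- Let p be an odd prime and j ≥ 1 an integer. With respect to the normalized Haar probability measure on the compact group SL₂(ℤ_p), the measure of the set {k ∈ SL₂(ℤ_p) : ‖k₂₁‖_p ≤ p^{−j}}, where k₂₁ denotes the lower-left entry of k, equals (p/(p+1))·p^{−j}. -/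
open MeasureTheory

/-- The topology on `SL₂(ℤ_p)` induced from the (compact) space of `2×2` matrices
over `ℤ_p`. -/
noncomputable instance SL2Zp.topologicalSpace (p : ℕ) [Fact p.Prime] :
    TopologicalSpace (Matrix.SpecialLinearGroup (Fin 2) ℤ_[p]) :=
  TopologicalSpace.induced (fun A => (A : Matrix (Fin 2) (Fin 2) ℤ_[p])) inferInstance

/-- The Borel σ-algebra on `SL₂(ℤ_p)`. -/
noncomputable instance SL2Zp.measurableSpace (p : ℕ) [Fact p.Prime] :
    MeasurableSpace (Matrix.SpecialLinearGroup (Fin 2) ℤ_[p]) := borel _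

/-!
Let `a` and `c` be the entries of the first column of `k ∈ SL(2, ℤ_[p])`. Left multiplication by
`lowerUnipotent s = !![1, 0; s, 1]` replaces `c` by `s * a + c`, and by
`weylElement = !![0, 1; -1, 0]` replaces it by `-a`; moreover `(a, c)` is nonzero modulo `p`.
Hence `SL(2, ℤ_[p])` is the disjoint union of the `p + 1` translates of `Γ₀(p)` indexed by
`ℙ¹(𝔽_p) = Option (ZMod p)`, and for `j ≥ 1`, `Γ₀(pʲ)` is the disjoint union of the `p`
translates of `Γ₀(pʲ⁺¹)` by `lowerUnipotent (t * pʲ)`. Left invariance gives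
`μ Γ₀(p) = 1 / (p + 1)` and `μ Γ₀(pʲ⁺¹) = μ Γ₀(pʲ) / p`.
-/

open scoped MatrixGroups ENNReal

theorem measure_eq_card_mul_of_existsUnique_mul_mem {G ι : Type*} [Group G] [MeasurableSpace G]
    [MeasurableMul G] [Fintype ι] (μ : Measure G) [μ.IsMulLeftInvariant]
    {A B : Set G} (hA : MeasurableSet A) (g : ι → G) (hB : ∀ x ∈ B, ∃! i, g i * x ∈ A)
    (hAB : ∀ i x, g i * x ∈ A → x ∈ B) :
    μ B = Fintype.card ι * μ A := by
  have hcover : B = ⋃ i, (g i * ·) ⁻¹' A := by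
    ext x
    simp only [Set.mem_iUnion, Set.mem_preimage]
    exact ⟨fun hx => (hB x hx).exists, fun ⟨i, hi⟩ => hAB i x hi⟩
  have hdisj : Pairwise (Function.onFun Disjoint fun i => (g i * ·) ⁻¹' A) := by
    intro i i' hii'
    refine Set.disjoint_left.2 fun x hi hi' => hii' ?_
    exact (hB x (hAB i x hi)).unique hi hi'
  rw [hcover, measure_iUnion hdisj fun i => measurable_const_mul (g i) hA, tsum_fintype]
  simp [measure_preimage_mul]

theorem existsUnique_mul_add_eq_zero {F : Type*} [Field F] {a : F} (ha : a ≠ 0) (c : F) :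
    ∃! t, t * a + c = 0 :=
  ⟨-c / a, by field_simp; ring, fun t ht => by rw [eq_div_iff ha]; linear_combination ht⟩

namespace Matrix.SpecialLinearGroup

variable {R : Type*} [CommRing R]

theorem map_apply_zero_zero_ne_zero_or {S : Type*} [CommRing S] [Nontrivial S] (f : R →+* S)
    (k : SL(2, R)) : f (k 0 0) ≠ 0 ∨ f (k 1 0) ≠ 0 := by
  by_contra! h
  have hdet := congrArg f k.det_coe
  rw [det_fin_two, map_sub, map_mul, map_mul, h.1, h.2] at hdet
  simp at hdet

def lowerUnipotent (s : R) : SL(2, R) :=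
  ⟨!![1, 0; s, 1], by simp [det_fin_two_of]⟩

def weylElement : SL(2, R) :=
  ⟨!![0, 1; -1, 0], by simp [det_fin_two_of]⟩

@[simp]
theorem lowerUnipotent_mul_apply_one_zero (s : R) (k : SL(2, R)) :
    (lowerUnipotent s * k) 1 0 = s * k 0 0 + k 1 0 := by
  rw [coe_mul]
  simp [lowerUnipotent, mul_apply, Fin.sum_univ_two]

@[simp]
theorem weylElement_mul_apply_one_zero (k : SL(2, R)) :
    (weylElement * k : SL(2, R)) 1 0 = -k 0 0 := by
  rw [coe_mul]
  simp [weylElement, mul_apply, Fin.sum_univ_two]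

end Matrix.SpecialLinearGroup

namespace PadicInt

variable {p : ℕ} [Fact p.Prime]

theorem dvd_iff_toZMod_eq_zero (x : ℤ_[p]) : (p : ℤ_[p]) ∣ x ↔ toZMod x = 0 := by
  rw [← RingHom.mem_ker, ker_toZMod, maximalIdeal_eq_span_p, Ideal.mem_span_singleton]

theorem toZMod_natCast_val (t : ZMod p) : toZMod (t.val : ℤ_[p]) = t := by
  simp

open Matrix.SpecialLinearGroup

instance : BorelSpace SL(2, ℤ_[p]) := ⟨rfl⟩

-- The topology above is Mathlib's subtype topology on `SL(2, ℤ_[p])`, but not reducibly so.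
instance : IsTopologicalGroup SL(2, ℤ_[p]) := Matrix.SpecialLinearGroup.topologicalGroup

variable (p) in
def Gamma0 (j : ℕ) : Set SL(2, ℤ_[p]) :=
  {k | (p : ℤ_[p]) ^ j ∣ k 1 0}

theorem mem_Gamma0 {j : ℕ} {k : SL(2, ℤ_[p])} : k ∈ Gamma0 p j ↔ (p : ℤ_[p]) ^ j ∣ k 1 0 :=
  Iff.rfl

theorem setOf_norm_le_eq_Gamma0 (j : ℕ) :
    {k : SL(2, ℤ_[p]) | ‖(k : Matrix (Fin 2) (Fin 2) ℤ_[p]) 1 0‖ ≤ (p : ℝ) ^ (-(j : ℤ))} =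
      Gamma0 p j := by
  ext k
  exact (norm_le_pow_iff_mem_span_pow _ j).trans Ideal.mem_span_singleton

theorem measurableSet_Gamma0 (j : ℕ) : MeasurableSet (Gamma0 p j) := by
  rw [← setOf_norm_le_eq_Gamma0]
  exact (isClosed_le (by fun_prop) continuous_const).measurableSet

theorem lowerUnipotent_mul_mem_Gamma0_succ_iff {j : ℕ} {k : SL(2, ℤ_[p])} {c : ℤ_[p]}
    (hc : k 1 0 = p ^ j * c) (t : ℤ_[p]) :
    lowerUnipotent (t * p ^ j) * k ∈ Gamma0 p (j + 1) ↔
      toZMod t * toZMod (k 0 0) + toZMod c = 0 := by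
  have hp : (p : ℤ_[p]) ^ j ≠ 0 := pow_ne_zero j (Nat.cast_ne_zero.2 (Fact.out : p.Prime).ne_zero)
  have hentry : (lowerUnipotent (t * p ^ j) * k) 1 0 = p ^ j * (t * k 0 0 + c) := by
    rw [lowerUnipotent_mul_apply_one_zero, hc]
    ring
  rw [mem_Gamma0, hentry, pow_succ, mul_dvd_mul_iff_left hp,
    dvd_iff_toZMod_eq_zero, map_add, map_mul]

theorem mem_Gamma0_of_lowerUnipotent_mul_mem {j : ℕ} {k : SL(2, ℤ_[p])} {t : ℤ_[p]}
    (h : lowerUnipotent (t * p ^ j) * k ∈ Gamma0 p (j + 1)) : k ∈ Gamma0 p j := by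
  have h' := (pow_dvd_pow (p : ℤ_[p]) j.le_succ).trans h
  rw [lowerUnipotent_mul_apply_one_zero] at h'
  exact (dvd_add_right ((dvd_mul_left _ t).mul_right _)).1 h'

theorem existsUnique_lowerUnipotent_mul_mem_Gamma0_succ {j : ℕ} (hj : 1 ≤ j) {k : SL(2, ℤ_[p])}
    (hk : k ∈ Gamma0 p j) :
    ∃! t : ZMod p, lowerUnipotent ((t.val : ℤ_[p]) * p ^ j) * k ∈ Gamma0 p (j + 1) := by
  obtain ⟨c, hc⟩ := hk
  have ha : toZMod (k 0 0) ≠ 0 := by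
    refine (map_apply_zero_zero_ne_zero_or toZMod k).resolve_right (not_not.2 ?_)
    rw [hc, map_mul, map_pow, map_natCast, ZMod.natCast_self, zero_pow (by omega), zero_mul]
  simp_rw [lowerUnipotent_mul_mem_Gamma0_succ_iff hc, toZMod_natCast_val]
  exact existsUnique_mul_add_eq_zero ha _

theorem existsUnique_mul_mem_Gamma0_one (k : SL(2, ℤ_[p])) :
    ∃! i : Option (ZMod p),
      (i.elim weylElement fun t => lowerUnipotent (t.val : ℤ_[p])) * k ∈ Gamma0 p 1 := by
  have hW : (weylElement : SL(2, ℤ_[p])) * k ∈ Gamma0 p 1 ↔ toZMod (k 0 0) = 0 := by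
    rw [mem_Gamma0, pow_one, weylElement_mul_apply_one_zero, dvd_neg,
      dvd_iff_toZMod_eq_zero]
  have hU (t : ZMod p) : lowerUnipotent (t.val : ℤ_[p]) * k ∈ Gamma0 p 1 ↔
      t * toZMod (k 0 0) + toZMod (k 1 0) = 0 := by
    have := lowerUnipotent_mul_mem_Gamma0_succ_iff (p := p) (j := 0) (k := k)
      (by rw [pow_zero, one_mul]) t.val
    rwa [pow_zero, mul_one, toZMod_natCast_val] at this
  by_cases ha : toZMod (k 0 0) = 0
  · have hc := (map_apply_zero_zero_ne_zero_or toZMod k).resolve_left (not_not.2 ha)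
    refine ⟨none, hW.2 ha, ?_⟩
    rintro (_ | t) ht
    · rfl
    · rw [Option.elim_some, hU, ha, mul_zero, zero_add] at ht
      exact absurd ht hc
  · obtain ⟨t, ht, huniq⟩ := existsUnique_mul_add_eq_zero ha (toZMod (k 1 0))
    refine ⟨some t, (hU t).2 ht, ?_⟩
    rintro (_ | t') ht'
    · exact absurd (hW.1 ht') ha
    · exact congrArg some (huniq t' ((hU t').1 ht'))

section Measure

variable (μ : Measure SL(2, ℤ_[p])) [μ.IsMulLeftInvariant]

theorem measure_Gamma0_one [IsProbabilityMeasure μ] : μ (Gamma0 p 1) * (p + 1) = 1 := by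
  have := measure_eq_card_mul_of_existsUnique_mul_mem μ (measurableSet_Gamma0 1) _
    (fun k _ => existsUnique_mul_mem_Gamma0_one k) fun _ _ _ => Set.mem_univ _
  rw [measure_univ, Fintype.card_option, ZMod.card] at this
  rw [mul_comm]
  exact_mod_cast this.symm

theorem measure_Gamma0_eq_mul_succ {j : ℕ} (hj : 1 ≤ j) :
    μ (Gamma0 p j) = p * μ (Gamma0 p (j + 1)) := by
  have := measure_eq_card_mul_of_existsUnique_mul_mem μ (measurableSet_Gamma0 (j + 1)) _
    (fun _ => existsUnique_lowerUnipotent_mul_mem_Gamma0_succ hj)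
    fun _ _ => mem_Gamma0_of_lowerUnipotent_mul_mem
  rwa [ZMod.card] at this

theorem measure_Gamma0 [IsProbabilityMeasure μ] (n : ℕ) :
    μ (Gamma0 p (n + 1)) = ((p : ℝ≥0∞) ^ n * (p + 1))⁻¹ := by
  refine ENNReal.eq_inv_of_mul_eq_one_left ?_
  induction n with
  | zero => rw [pow_zero, one_mul, measure_Gamma0_one]
  | succ n ih =>
    rw [measure_Gamma0_eq_mul_succ μ (by omega)] at ih
    convert ih using 1
    ring

end Measure

end PadicInt

theorem haar_measure_lower_left_entry_small_general (p : ℕ) [Fact p.Prime]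
    (j : ℕ) (hj : 1 ≤ j)
    (μ : Measure (Matrix.SpecialLinearGroup (Fin 2) ℤ_[p]))
    (hμ : μ.IsHaarMeasure) (hprob : IsProbabilityMeasure μ) :
    μ {k : Matrix.SpecialLinearGroup (Fin 2) ℤ_[p] |
        ‖(k : Matrix (Fin 2) (Fin 2) ℤ_[p]) 1 0‖ ≤ (p : ℝ) ^ (-(j : ℤ))} =
      ENNReal.ofReal ((p / (p + 1) : ℝ) * (p : ℝ) ^ (-(j : ℤ))) := by
  obtain ⟨n, rfl⟩ := Nat.exists_eq_add_of_le' hj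
  have hp : (0 : ℝ) < p := Nat.cast_pos.2 (Fact.out : p.Prime).pos
  have hreal : (p / (p + 1) : ℝ) * (p : ℝ) ^ (-((n + 1 : ℕ) : ℤ)) =
      ((p : ℝ) ^ n * (p + 1))⁻¹ := by
    rw [zpow_neg, zpow_natCast]
    field_simp
    ring
  rw [PadicInt.setOf_norm_le_eq_Gamma0, PadicInt.measure_Gamma0 μ n, hreal,
    ENNReal.ofReal_inv_of_pos (by positivity), ENNReal.ofReal_mul (by positivity),
    ENNReal.ofReal_pow hp.le, ENNReal.ofReal_add hp.le zero_le_one, ENNReal.ofReal_natCast,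
    ENNReal.ofReal_one]

/-- With respect to the Haar probability measure on the compact group `SL₂(ℤ_p)`
(`p` an odd prime), the set of matrices whose lower-left entry has norm at most `p^{−j}`
(`j ≥ 1`) has measure `(p/(p+1))·p^{−j}`. -/
theorem haar_measure_lower_left_entry_small (p : ℕ) [Fact p.Prime] (hp : Odd p)
    (j : ℕ) (hj : 1 ≤ j)
    (μ : Measure (Matrix.SpecialLinearGroup (Fin 2) ℤ_[p]))
    (hμ : μ.IsHaarMeasure) (hprob : IsProbabilityMeasure μ) :
    μ {k : Matrix.SpecialLinearGroup (Fin 2) ℤ_[p] |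
        ‖(k : Matrix (Fin 2) (Fin 2) ℤ_[p]) 1 0‖ ≤ (p : ℝ) ^ (-(j : ℤ))} =
      ENNReal.ofReal ((p / (p + 1) : ℝ) * (p : ℝ) ^ (-(j : ℤ))) :=
  haar_measure_lower_left_entry_small_general p j hj μ hμ hprob
end

section
/- Let p be an odd prime and let t, r be integers with t ≥ 1 and 0 ≤ r < 2t. Let a_t = diag(p^{−t}, p^t) ∈ GL₂(ℚ_p). Then with respect to the normalized Haar probability measure on SL₂(ℤ_p), the measure of the set {k ∈ SL₂(ℤ_p) : every entry of the matrix a_t·k·a_t^{−1} has p-adic norm at most p^r} is at most (p/(p+1))·p^{−(2t−r)}. -/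
/-!
Only the upper right entry matters: `(a_t k a_t⁻¹)₀₁ = p^{-2t} k₀₁`, so the set lies in the
congruence subgroup `Γ⁰(p^n) = {k | p^n ∣ k₀₁}` with `n = 2t - r ≥ 1`. The left cosets of
`Γ⁰(p^n)` are told apart by the second column of a representative up to scaling mod `p^n`,
i.e. by points of `ℙ¹(ℤ/p^n)`, of which there are `p^n + p^{n-1} = (p + 1) p^{n-1}`. These
disjoint translates all have the measure of `Γ⁰(p^n)`, which is therefore at most
`1 / ((p + 1) p^{n-1}) = (p / (p + 1)) p^{-n}`.
-/

open MeasureTheory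

instance SL2Zp.isTopologicalGroup (p : ℕ) [Fact p.Prime] :
    IsTopologicalGroup (Matrix.SpecialLinearGroup (Fin 2) ℤ_[p]) :=
  Matrix.SpecialLinearGroup.topologicalGroup

instance SL2Zp.borelSpace (p : ℕ) [Fact p.Prime] :
    BorelSpace (Matrix.SpecialLinearGroup (Fin 2) ℤ_[p]) := ⟨rfl⟩

open Function Set
open scoped ENNReal Pointwise

theorem Subgroup.card_mul_measure_le_measure_univ {G : Type*} [Group G] [MeasurableSpace G]
    [MeasurableMul G] {H : Subgroup G} (hH : MeasurableSet (H : Set G)) (μ : Measure G)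
    [μ.IsMulLeftInvariant] {ι : Type*} [Fintype ι] {g : ι → G}
    (hg : Injective fun i ↦ (g i : G ⧸ H)) :
    Fintype.card ι * μ H ≤ μ univ := by
  have hdisj : Pairwise (Disjoint on fun i ↦ g i • (H : Set G)) := fun i j hij ↦
    disjoint_left.2 fun x hi hj ↦ hij <| hg <| by
      rw [mem_leftCoset_iff] at hi hj
      exact (QuotientGroup.eq.2 hi).trans (QuotientGroup.eq.2 hj).symm
  calc Fintype.card ι * μ H = ∑ i, μ (g i • (H : Set G)) := by simp [measure_smul]
    _ = μ (⋃ i, g i • (H : Set G)) := by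
      rw [measure_iUnion hdisj fun i ↦ hH.const_smul _, tsum_fintype]
    _ ≤ μ univ := measure_mono (subset_univ _)

theorem Matrix.diagonal_mul_mul_inv_diagonal_apply {K n : Type*} [Field K] [Fintype n]
    [DecidableEq n] {d : n → K} (hd : ∀ i, d i ≠ 0) (M : Matrix n n K) (i j : n) :
    (diagonal d * M * (diagonal d)⁻¹) i j = d i * M i j / d j := by
  have hinv : (diagonal d)⁻¹ = diagonal fun i ↦ (d i)⁻¹ :=
    inv_eq_left_inv <| by simp [diagonal_mul_diagonal, hd]
  rw [hinv, mul_diagonal, diagonal_mul, div_eq_mul_inv]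

namespace Matrix.SpecialLinearGroup

variable {R : Type*} [CommRing R]

theorem inv_mul_apply_zero_one (x y : SpecialLinearGroup (Fin 2) R) :
    (x⁻¹ * y) 0 1 = x 1 1 * y 0 1 - x 0 1 * y 1 1 := by
  simp only [coe_mul, coe_inv, adjugate_fin_two, mul_apply, of_apply, cons_val', cons_val_fin_one,
    cons_val_zero, cons_val_one, Fin.sum_univ_two]
  ring

/-- The congruence subgroup `Γ⁰(I)`. -/
def gammaUpper (I : Ideal R) : Subgroup (SpecialLinearGroup (Fin 2) R) where
  carrier := {k | k 0 1 ∈ I}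
  one_mem' := by simp
  mul_mem' {a b} ha hb := by
    simp only [mem_ofPred_eq, coe_mul, mul_apply, Fin.sum_univ_two] at ha hb ⊢
    exact I.add_mem (I.mul_mem_left _ hb) (I.mul_mem_right _ ha)
  inv_mem' {a} ha := by simpa [coe_inv, adjugate_fin_two] using ha

theorem mem_gammaUpper {I : Ideal R} {k : SpecialLinearGroup (Fin 2) R} :
    k ∈ gammaUpper I ↔ k 0 1 ∈ I := Iff.rfl

theorem isClosed_gammaUpper [TopologicalSpace R] {I : Ideal R} (hI : IsClosed (I : Set R)) :
    IsClosed (gammaUpper I : Set (SpecialLinearGroup (Fin 2) R)) :=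
  hI.preimage (by fun_prop : Continuous fun k : SpecialLinearGroup (Fin 2) R ↦ k 0 1)

def upperUnipotent (x : R) : SpecialLinearGroup (Fin 2) R :=
  ⟨!![1, x; 0, 1], by simp⟩

def weylUnipotent (x : R) : SpecialLinearGroup (Fin 2) R :=
  ⟨!![0, 1; -1, x], by simp⟩

@[simp] theorem upperUnipotent_apply_zero_one (x : R) : upperUnipotent x 0 1 = x := rfl
@[simp] theorem upperUnipotent_apply_one_one (x : R) : upperUnipotent x 1 1 = 1 := rfl
@[simp] theorem weylUnipotent_apply_zero_one (x : R) : weylUnipotent x 0 1 = 1 := rfl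
@[simp] theorem weylUnipotent_apply_one_one (x : R) : weylUnipotent x 1 1 = x := rfl

end Matrix.SpecialLinearGroup

namespace PadicInt

open Matrix Matrix.SpecialLinearGroup

variable {p : ℕ} [Fact p.Prime]

theorem isClosed_span_pow (m : ℕ) : IsClosed (Ideal.span {(p : ℤ_[p]) ^ m} : Set ℤ_[p]) := by
  convert Metric.isClosed_closedBall (x := (0 : ℤ_[p])) (ε := (p : ℝ) ^ (-m : ℤ)) using 1
  ext x
  rw [SetLike.mem_coe, Metric.mem_closedBall, dist_zero_right, norm_le_pow_iff_mem_span_pow]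

theorem eq_of_pow_dvd_val_sub {m : ℕ} {u v : ZMod (p ^ m)}
    (h : (p : ℤ_[p]) ^ m ∣ (u.val : ℤ_[p]) - v.val) : u = v := by
  rwa [← Ideal.mem_span_singleton, ← ker_toZModPow, RingHom.mem_ker, map_sub, map_natCast,
    map_natCast, ZMod.natCast_zmod_val, ZMod.natCast_zmod_val, sub_eq_zero] at h

theorem not_pow_succ_dvd_one_sub_p_mul (n : ℕ) (c : ℤ_[p]) :
    ¬ (p : ℤ_[p]) ^ (n + 1) ∣ 1 - p * c := by
  intro h
  have hp : (p : ℤ_[p]) ∣ 1 := by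
    simpa using (dvd_pow_self _ n.succ_ne_zero |>.trans h).add (dvd_mul_right (p : ℤ_[p]) c)
  exact p_nonunit (isUnit_of_dvd_one hp)

/-- Representatives with second columns `(u, 1)` and `(1, p w)`: one for each point of
`ℙ¹(ℤ/p^{n+1})`. -/
noncomputable def gammaUpperCosetRep (n : ℕ) :
    ZMod (p ^ (n + 1)) ⊕ ZMod (p ^ n) → SpecialLinearGroup (Fin 2) ℤ_[p] :=
  Sum.elim (fun u ↦ upperUnipotent (u.val : ℤ_[p])) (fun w ↦ weylUnipotent (p * w.val))

theorem injective_gammaUpperCosetRep (n : ℕ) :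
    Injective fun i ↦ (QuotientGroup.mk (gammaUpperCosetRep n i) :
      SpecialLinearGroup (Fin 2) ℤ_[p] ⧸ gammaUpper (Ideal.span {(p : ℤ_[p]) ^ (n + 1)})) := by
  intro i j hij
  rw [QuotientGroup.eq, mem_gammaUpper, Ideal.mem_span_singleton, inv_mul_apply_zero_one] at hij
  rcases i with u | w <;> rcases j with u' | w' <;>
    simp only [gammaUpperCosetRep, Sum.elim_inl, Sum.elim_inr, upperUnipotent_apply_zero_one,
      upperUnipotent_apply_one_one, weylUnipotent_apply_zero_one, weylUnipotent_apply_one_one,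
      one_mul, mul_one] at hij
  case inl.inl => exact congrArg Sum.inl (eq_of_pow_dvd_val_sub hij).symm
  case inl.inr =>
    refine absurd ?_ (not_pow_succ_dvd_one_sub_p_mul n (u.val * w'.val : ℤ_[p]))
    rwa [mul_left_comm] at hij
  case inr.inl =>
    refine absurd ?_ (not_pow_succ_dvd_one_sub_p_mul n (w.val * u'.val : ℤ_[p]))
    rwa [← dvd_neg, neg_sub, mul_assoc] at hij
  case inr.inr =>
    rw [← mul_sub, pow_succ',
      mul_dvd_mul_iff_left (Nat.cast_ne_zero.2 (Fact.out : p.Prime).ne_zero)] at hij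
    exact congrArg Sum.inr (eq_of_pow_dvd_val_sub hij)

theorem measure_gammaUpper_le (n : ℕ) (μ : Measure (SpecialLinearGroup (Fin 2) ℤ_[p]))
    [μ.IsMulLeftInvariant] [IsProbabilityMeasure μ] :
    μ (gammaUpper (Ideal.span {(p : ℤ_[p]) ^ (n + 1)})) ≤ (((p + 1) * p ^ n : ℕ) : ℝ≥0∞)⁻¹ := by
  have hclosed : IsClosed (gammaUpper (Ideal.span {(p : ℤ_[p]) ^ (n + 1)}) :
      Set (SpecialLinearGroup (Fin 2) ℤ_[p])) := isClosed_gammaUpper (isClosed_span_pow _)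
  have h := Subgroup.card_mul_measure_le_measure_univ hclosed.measurableSet μ
    (injective_gammaUpperCosetRep n)
  rw [measure_univ, Fintype.card_sum, ZMod.card, ZMod.card] at h
  rw [ENNReal.le_inv_iff_mul_le, mul_comm]
  convert h using 2
  push_cast
  ring

theorem norm_conj_diagonal_apply_zero_one_le_iff (t r : ℤ) (k : Matrix (Fin 2) (Fin 2) ℤ_[p]) :
    ‖(diagonal ![(p : ℚ_[p]) ^ (-t), (p : ℚ_[p]) ^ t] * k.map (fun x ↦ (x : ℚ_[p])) *
        (diagonal ![(p : ℚ_[p]) ^ (-t), (p : ℚ_[p]) ^ t])⁻¹) 0 1‖ ≤ (p : ℝ) ^ r ↔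
      ‖k 0 1‖ ≤ (p : ℝ) ^ (r - 2 * t) := by
  have hp : (0 : ℝ) < p := Nat.cast_pos.2 (Fact.out : p.Prime).pos
  have hpt : (0 : ℝ) < p ^ t := zpow_pos hp t
  have hd : ∀ i, ![(p : ℚ_[p]) ^ (-t), (p : ℚ_[p]) ^ t] i ≠ 0 := by
    have hp0 : (p : ℚ_[p]) ≠ 0 := Nat.cast_ne_zero.2 (Fact.out : p.Prime).ne_zero
    intro i; fin_cases i <;> exact zpow_ne_zero _ hp0
  have hr : (p : ℝ) ^ r = p ^ t * p ^ (r - 2 * t) * p ^ t := by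
    rw [← zpow_add₀ hp.ne', ← zpow_add₀ hp.ne']
    ring_nf
  rw [diagonal_mul_mul_inv_diagonal_apply hd]
  simp only [_root_.zpow_neg, cons_val_zero, cons_val_one, cons_val_fin_one, map_apply,
    norm_div, norm_mul, norm_inv, Padic.norm_p_zpow, inv_inv, padic_norm_e_of_padicInt,
    div_inv_eq_mul]
  rw [hr, mul_le_mul_iff_left₀ hpt, mul_le_mul_iff_right₀ hpt]

end PadicInt

open PadicInt Matrix.SpecialLinearGroup in
theorem haar_measure_conj_entries_le_general (p : ℕ) [Fact p.Prime]
    (t r : ℤ) (hr : r < 2 * t)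
    (μ : Measure (Matrix.SpecialLinearGroup (Fin 2) ℤ_[p]))
    (hμ : μ.IsHaarMeasure) (hprob : IsProbabilityMeasure μ) :
    μ {k : Matrix.SpecialLinearGroup (Fin 2) ℤ_[p] |
        ∀ i j : Fin 2,
          ‖(Matrix.diagonal ![(p : ℚ_[p]) ^ (-t), (p : ℚ_[p]) ^ t] *
              (k : Matrix (Fin 2) (Fin 2) ℤ_[p]).map (fun x => (x : ℚ_[p])) *
              (Matrix.diagonal ![(p : ℚ_[p]) ^ (-t), (p : ℚ_[p]) ^ t])⁻¹) i j‖
            ≤ (p : ℝ) ^ r} ≤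
      ENNReal.ofReal ((p / (p + 1) : ℝ) * (p : ℝ) ^ (-(2 * t - r))) := by
  obtain ⟨n, hn⟩ : ∃ n : ℕ, 2 * t - r = n + 1 := ⟨(2 * t - r - 1).toNat, by omega⟩
  refine (measure_mono fun k hk ↦ ?_).trans ((measure_gammaUpper_le n μ).trans_eq ?_)
  · have h := (norm_conj_diagonal_apply_zero_one_le_iff t r _).1 (hk 0 1)
    rw [SetLike.mem_coe, mem_gammaUpper, ← norm_le_pow_iff_mem_span_pow]
    rwa [show r - 2 * t = -((n + 1 : ℕ) : ℤ) by push_cast; omega] at h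
  · have hp := (Fact.out : p.Prime).pos
    rw [hn, ← ENNReal.ofReal_natCast, ← ENNReal.ofReal_inv_of_pos (by positivity)]
    congr 1
    rw [zpow_neg, zpow_add_one₀ (by positivity), zpow_natCast]
    push_cast
    field_simp

/-- Spherical measure estimate in the Bruhat–Tits tree (rank 3, `p`-adic case): for an odd
prime `p`, integers `t ≥ 1` and `0 ≤ r < 2t`, and `a_t = diag(p^{−t}, p^t)`, the Haar
probability measure of the set of `k ∈ SL₂(ℤ_p)` all of whose conjugate's `a_t k a_t⁻¹`
entries have norm at most `p^r` is at most `(p/(p+1))·p^{−(2t−r)}`. -/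
theorem haar_measure_conj_entries_le (p : ℕ) [Fact p.Prime] (hp : Odd p)
    (t r : ℤ) (ht : 1 ≤ t) (hr0 : 0 ≤ r) (hr : r < 2 * t)
    (μ : Measure (Matrix.SpecialLinearGroup (Fin 2) ℤ_[p]))
    (hμ : μ.IsHaarMeasure) (hprob : IsProbabilityMeasure μ) :
    μ {k : Matrix.SpecialLinearGroup (Fin 2) ℤ_[p] |
        ∀ i j : Fin 2,
          ‖(Matrix.diagonal ![(p : ℚ_[p]) ^ (-t), (p : ℚ_[p]) ^ t] *
              (k : Matrix (Fin 2) (Fin 2) ℤ_[p]).map (fun x => (x : ℚ_[p])) *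
              (Matrix.diagonal ![(p : ℚ_[p]) ^ (-t), (p : ℚ_[p]) ^ t])⁻¹) i j‖
            ≤ (p : ℝ) ^ r} ≤
      ENNReal.ofReal ((p / (p + 1) : ℝ) * (p : ℝ) ^ (-(2 * t - r))) :=
  haar_measure_conj_entries_le_general p t r hr μ hμ hprob
end
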